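/- Let Σ be a set of clauses with w(Σ) ≤ k. There is no resolution refutation of Σ of width at most k if and only if there exists an extendible (k+1)-family of partial assignments for Σ. -/

import Mathlib

/-!
If `A` is an extendible `(k+1)`-family, no member of `A` falsifies a clause derivable in
width `k`: a member falsifying a resolvent can be shrunk to the `≤ k` negated literals of the
resolvent and then extended at the pivot, and the extension falsifies one of the premises.
Conversely, if the empty clause is not derivable in width `k`, the partial assignments of
size `≤ k+1` falsifying no clause derivable in width `k` form an extendible `(k+1)`-family:
if neither value of `x` extends such an `α` with `|α| ≤ k`, the two clauses falsified by the
extensions resolve on `x` to a clause falsified by `α`, hence of width `≤ k` and derivable.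
-/

attribute [local instance] Classical.propDecidable

/-- A clause: a finite set of literals, a literal being a variable with a sign. -/
abbrev Clause := Finset (ℕ × Bool)

/-- A total truth assignment satisfies a clause if it makes some literal true. -/
def clauseSat (a : ℕ → Bool) (C : Clause) : Prop :=
  ∃ l ∈ C, (if l.2 then a l.1 else !(a l.1)) = true

/-- A set of clauses is unsatisfiable (contradictory). -/
def Unsat (S : Set Clause) : Prop := ∀ a : ℕ → Bool, ¬ ∀ C ∈ S, clauseSat a C

/-- The variables occurring in a set of clauses. -/
def varsOf (S : Set Clause) : Set ℕ := {x | ∃ C ∈ S, ∃ b, (x, b) ∈ C}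

/-- The resolventCl of C and D upon the variable x. -/
def resolventCl (C D : Clause) (x : ℕ) : Clause := C.erase (x, true) ∪ D.erase (x, false)

/-- A (general, dag-like) resolution derivation from S: a sequence of clauses each of
which is a clause of S or a resolventCl of two earlier clauses. -/
def IsDerivation (S : Set Clause) (L : List Clause) : Prop :=
  ∀ i < L.length, L.getD i ∅ ∈ S ∨
    ∃ j < i, ∃ k < i, ∃ x : ℕ,
      (x, true) ∈ L.getD j ∅ ∧ (x, false) ∈ L.getD k ∅ ∧
      L.getD i ∅ = resolventCl (L.getD j ∅) (L.getD k ∅) x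

/-- A resolution refutation of S: a derivation from S containing the empty clause. -/
def IsRefutation (S : Set Clause) (L : List Clause) : Prop :=
  IsDerivation S L ∧ (∅ : Clause) ∈ L

/-- A partial assignment, presented as a functional finite set of (variable, value)
pairs; its cardinality is the number of assigned variables. -/
def Functional (α : Finset (ℕ × Bool)) : Prop :=
  ∀ x b b', (x, b) ∈ α → (x, b') ∈ α → b = b'

/-- A partial assignment falsifies a clause if it sets every literal of it false. -/
def Falsifies (α : Finset (ℕ × Bool)) (C : Clause) : Prop := ∀ l ∈ C, (l.1, !l.2) ∈ α

/-- An extendible k-family for S: a nonempty family of partial assignments, none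
falsifying a clause of S, each of size at most k, closed under subassignments, and
such that any member of size < k can be extended inside the family so as to assign
any given variable of S. -/
def ExtFamily (S : Set Clause) (k : ℕ) (A : Set (Finset (ℕ × Bool))) : Prop :=
  A.Nonempty ∧
  (∀ α ∈ A, Functional α) ∧
  (∀ α ∈ A, ∀ C ∈ S, ¬ Falsifies α C) ∧
  (∀ α ∈ A, α.card ≤ k) ∧
  (∀ α ∈ A, ∀ β ⊆ α, β ∈ A) ∧
  (∀ α ∈ A, α.card < k → ∀ x ∈ varsOf S, ∃ β ∈ A, α ⊆ β ∧ ∃ b, (x, b) ∈ β)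

def negLit (l : ℕ × Bool) : ℕ × Bool := (l.1, !l.2)

lemma negLit_injective : Function.Injective negLit := by
  rintro ⟨x, b⟩ ⟨y, c⟩ h
  simpa [negLit] using h

lemma falsifies_iff_image_subset {α : Finset (ℕ × Bool)} {C : Clause} :
    Falsifies α C ↔ C.image negLit ⊆ α := by
  simp [Falsifies, Finset.image_subset_iff, negLit]

lemma falsifies_image_negLit (C : Clause) : Falsifies (C.image negLit) C :=
  falsifies_iff_image_subset.2 subset_rfl

lemma Falsifies.mono {α β : Finset (ℕ × Bool)} {C : Clause} (h : Falsifies α C) (hαβ : α ⊆ β) :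
    Falsifies β C :=
  fun l hl => hαβ (h l hl)

lemma Falsifies.card_le {α : Finset (ℕ × Bool)} {C : Clause} (h : Falsifies α C) :
    C.card ≤ α.card := by
  rw [← Finset.card_image_of_injective C negLit_injective]
  exact Finset.card_le_card (falsifies_iff_image_subset.1 h)

lemma Falsifies.of_insert {α : Finset (ℕ × Bool)} {C : Clause} {x : ℕ} {b : Bool}
    (h : Falsifies (insert (x, b) α) C) (hC : (x, !b) ∉ C) : Falsifies α C := by
  intro l hl
  rcases Finset.mem_insert.1 (h l hl) with hlx | hlα
  · obtain ⟨x', b'⟩ := l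
    simp only [Prod.mk.injEq] at hlx
    obtain ⟨rfl, rfl⟩ := hlx
    simp at hC hl
    exact absurd hl hC
  · exact hlα

lemma falsifies_resolventCl_iff {α : Finset (ℕ × Bool)} {C D : Clause} {x : ℕ} :
    Falsifies α (resolventCl C D x) ↔
      Falsifies (insert (x, false) α) C ∧ Falsifies (insert (x, true) α) D := by
  simp only [Falsifies, resolventCl, Finset.mem_union, Finset.mem_erase, Finset.mem_insert]
  constructor
  · intro h
    refine ⟨fun l hl => ?_, fun l hl => ?_⟩
    · by_cases hlx : l = (x, true)
      · simp [hlx]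
      · exact .inr (h l (.inl ⟨hlx, hl⟩))
    · by_cases hlx : l = (x, false)
      · simp [hlx]
      · exact .inr (h l (.inr ⟨hlx, hl⟩))
  · rintro ⟨hC, hD⟩ l (⟨hlx, hl⟩ | ⟨hlx, hl⟩)
    · rcases hC l hl with h | h
      · obtain ⟨x', b'⟩ := l; simp_all
      · exact h
    · rcases hD l hl with h | h
      · obtain ⟨x', b'⟩ := l; simp_all
      · exact h

section Derivations

variable {S : Set Clause} {k : ℕ}

def Follows (S : Set Clause) (L : List Clause) (R : Clause) : Prop :=
  R ∈ S ∨ ∃ C ∈ L, ∃ D ∈ L, ∃ x, (x, true) ∈ C ∧ (x, false) ∈ D ∧ R = resolventCl C D x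

lemma Follows.mono {L L' : List Clause} {R : Clause} (h : Follows S L R) (hL : L ⊆ L') :
    Follows S L' R := by
  rcases h with h | ⟨C, hC, D, hD, x, hxC, hxD, rfl⟩
  · exact .inl h
  · exact .inr ⟨C, hL hC, D, hL hD, x, hxC, hxD, rfl⟩

lemma isDerivation_nil : IsDerivation S [] := by
  simp [IsDerivation]

lemma isDerivation_concat_iff {L : List Clause} {R : Clause} :
    IsDerivation S (L ++ [R]) ↔ IsDerivation S L ∧ Follows S L R := by
  have hget : ∀ i < L.length, (L ++ [R]).getD i ∅ = L.getD i ∅ :=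
    fun i hi => List.getD_append _ _ _ _ hi
  have hlast : (L ++ [R]).getD L.length ∅ = R := by simp
  have hmem : ∀ j < L.length, L.getD j ∅ ∈ L :=
    fun j hj => List.getD_eq_getElem _ _ hj ▸ List.getElem_mem hj
  constructor
  · intro h
    refine ⟨fun i hi => ?_, ?_⟩
    · rcases h i (by simp; omega) with hS | ⟨j, hj, m, hm, x, hxj, hxm, hres⟩
      · exact .inl (hget i hi ▸ hS)
      · rw [hget i hi, hget j (by omega), hget m (by omega)] at hres
        rw [hget j (by omega)] at hxj
        rw [hget m (by omega)] at hxm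
        exact .inr ⟨j, hj, m, hm, x, hxj, hxm, hres⟩
    · rcases h L.length (by simp) with hS | ⟨j, hj, m, hm, x, hxj, hxm, hres⟩
      · exact .inl (hlast ▸ hS)
      · rw [hlast, hget j hj, hget m hm] at hres
        rw [hget j hj] at hxj
        rw [hget m hm] at hxm
        exact .inr ⟨_, hmem j hj, _, hmem m hm, x, hxj, hxm, hres⟩
  · rintro ⟨hL, hR⟩ i hi
    rw [List.length_append, List.length_singleton] at hi
    rcases Nat.lt_succ_iff_lt_or_eq.1 hi with hi | rfl
    · rcases hL i hi with hS | ⟨j, hj, m, hm, x, hxj, hxm, hres⟩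
      · exact .inl ((hget i hi).symm ▸ hS)
      · refine .inr ⟨j, hj, m, hm, x, ?_, ?_, ?_⟩
        · rwa [hget j (by omega)]
        · rwa [hget m (by omega)]
        · rwa [hget i hi, hget j (by omega), hget m (by omega)]
    · rw [hlast]
      rcases hR with hS | ⟨C, hC, D, hD, x, hxC, hxD, rfl⟩
      · exact .inl hS
      · obtain ⟨j, hj, rfl⟩ := List.getElem_of_mem hC
        obtain ⟨m, hm, rfl⟩ := List.getElem_of_mem hD
        have hgj := (hget j hj).trans (List.getD_eq_getElem _ _ hj)
        have hgm := (hget m hm).trans (List.getD_eq_getElem _ _ hm)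
        exact .inr ⟨j, hj, m, hm, x, by rwa [hgj], by rwa [hgm], by rw [hgj, hgm]⟩

lemma IsDerivation.append {L₁ L₂ : List Clause} (h₁ : IsDerivation S L₁)
    (h₂ : IsDerivation S L₂) : IsDerivation S (L₁ ++ L₂) := by
  induction L₂ using List.reverseRecOn with
  | nil => simpa
  | append_singleton L R ih =>
    obtain ⟨hL, hR⟩ := isDerivation_concat_iff.1 h₂
    rw [← List.append_assoc]
    exact isDerivation_concat_iff.2 ⟨ih hL, hR.mono (List.subset_append_right _ _)⟩

inductive WidthDerivable (S : Set Clause) (k : ℕ) : Clause → Prop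
  | mem {C : Clause} : C ∈ S → C.card ≤ k → WidthDerivable S k C
  | resolve {C D : Clause} {x : ℕ} : WidthDerivable S k C → WidthDerivable S k D →
      (x, true) ∈ C → (x, false) ∈ D → (resolventCl C D x).card ≤ k →
      WidthDerivable S k (resolventCl C D x)

lemma WidthDerivable.exists_derivation {C : Clause} (h : WidthDerivable S k C) :
    ∃ L, IsDerivation S L ∧ C ∈ L ∧ ∀ D ∈ L, D.card ≤ k := by
  induction h with
  | mem hC hk =>
    exact ⟨[] ++ [_], isDerivation_concat_iff.2 ⟨isDerivation_nil, .inl hC⟩, by simp, by simpa⟩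
  | @resolve C D x _ _ hxC hxD hk ihC ihD =>
    obtain ⟨L₁, hL₁, hC₁, hw₁⟩ := ihC
    obtain ⟨L₂, hL₂, hD₂, hw₂⟩ := ihD
    refine ⟨L₁ ++ L₂ ++ [resolventCl C D x], isDerivation_concat_iff.2 ⟨hL₁.append hL₂,
      .inr ⟨C, List.mem_append_left _ hC₁, D, List.mem_append_right _ hD₂, x, hxC, hxD, rfl⟩⟩,
      by simp, ?_⟩
    simp only [List.mem_append, List.mem_singleton]
    rintro E ((hE | hE) | rfl)
    exacts [hw₁ E hE, hw₂ E hE, hk]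

lemma IsDerivation.widthDerivable {L : List Clause} (hL : IsDerivation S L)
    (hk : ∀ C ∈ L, C.card ≤ k) : ∀ C ∈ L, WidthDerivable S k C := by
  induction L using List.reverseRecOn with
  | nil => simp
  | append_singleton L R ih =>
    obtain ⟨hL, hR⟩ := isDerivation_concat_iff.1 hL
    have ih := ih hL fun C hC => hk C (List.mem_append_left _ hC)
    have hkR : R.card ≤ k := hk R (by simp)
    simp only [List.mem_append, List.mem_singleton]
    rintro C (hC | rfl)
    · exact ih C hC
    rcases hR with hS | ⟨C, hC, D, hD, x, hxC, hxD, rfl⟩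
    · exact .mem hS hkR
    · exact .resolve (ih C hC) (ih D hD) hxC hxD hkR

lemma exists_narrow_refutation_iff :
    (∃ L : List Clause, IsRefutation S L ∧ ∀ C ∈ L, C.card ≤ k) ↔ WidthDerivable S k ∅ := by
  constructor
  · rintro ⟨L, ⟨hL, hmem⟩, hk⟩
    exact hL.widthDerivable hk ∅ hmem
  · intro h
    obtain ⟨L, hL, hmem, hk⟩ := h.exists_derivation
    exact ⟨L, ⟨hL, hmem⟩, hk⟩

lemma WidthDerivable.fst_mem_varsOf {C : Clause} (h : WidthDerivable S k C) :
    ∀ l ∈ C, l.1 ∈ varsOf S := by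
  induction h with
  | mem hC _ => exact fun l hl => ⟨_, hC, l.2, hl⟩
  | resolve _ _ _ _ _ ihC ihD =>
    intro l hl
    rcases Finset.mem_union.1 hl with hl | hl
    exacts [ihC l (Finset.mem_of_mem_erase hl), ihD l (Finset.mem_of_mem_erase hl)]

end Derivations

section ExtendibleFamilies

variable {S : Set Clause} {k : ℕ}

lemma ExtFamily.not_falsifies_of_widthDerivable {A : Set (Finset (ℕ × Bool))}
    (hA : ExtFamily S (k + 1) A) {C : Clause} (hC : WidthDerivable S k C) :
    ∀ α ∈ A, ¬ Falsifies α C := by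
  obtain ⟨-, -, hS, -, hdown, hext⟩ := hA
  induction hC with
  | mem hC _ => exact fun α hα => hS α hα _ hC
  | @resolve C D x hCder _ hxC _ hk ihC ihD =>
    intro α hα hfal
    set β := (resolventCl C D x).image negLit
    have hβ : β ∈ A := hdown α hα β (falsifies_iff_image_subset.1 hfal)
    have hβk : β.card < k + 1 := Finset.card_image_le.trans_lt (Nat.lt_succ_of_le hk)
    obtain ⟨γ, hγ, hβγ, b, hxb⟩ := hext β hβ hβk x (hCder.fst_mem_varsOf _ hxC)
    have hγfal := falsifies_resolventCl_iff.1 ((falsifies_image_negLit _).mono hβγ)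
    cases b
    · exact ihC γ hγ (Finset.insert_eq_of_mem hxb ▸ hγfal.1)
    · exact ihD γ hγ (Finset.insert_eq_of_mem hxb ▸ hγfal.2)

lemma Functional.insert {α : Finset (ℕ × Bool)} {x : ℕ} (h : Functional α)
    (hx : ∀ b, (x, b) ∉ α) (b : Bool) : Functional (insert (x, b) α) := by
  intro y c c' hc hc'
  simp only [Finset.mem_insert, Prod.mk.injEq] at hc hc'
  rcases hc with ⟨rfl, rfl⟩ | hc <;> rcases hc' with ⟨hy, rfl⟩ | hc'
  · rfl
  · exact absurd hc' (hx c')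
  · exact absurd (hy ▸ hc) (hx c)
  · exact h y c c' hc hc'

def narrowlyConsistent (S : Set Clause) (k : ℕ) : Set (Finset (ℕ × Bool)) :=
  {α | Functional α ∧ α.card ≤ k + 1 ∧ ∀ C, WidthDerivable S k C → ¬ Falsifies α C}

lemma exists_extension_mem_narrowlyConsistent {α : Finset (ℕ × Bool)}
    (hα : α ∈ narrowlyConsistent S k) (hcard : α.card < k + 1) (x : ℕ) :
    ∃ β ∈ narrowlyConsistent S k, α ⊆ β ∧ ∃ b, (x, b) ∈ β := by
  by_cases hx : ∃ b, (x, b) ∈ α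
  · exact ⟨α, hα, subset_rfl, hx⟩
  push Not at hx
  obtain ⟨hfun, -, hcons⟩ := hα
  by_contra! hnone
  have hfal : ∀ b, ∃ C, WidthDerivable S k C ∧ Falsifies (insert (x, b) α) C := by
    intro b
    by_contra! hb
    exact hnone _ ⟨hfun.insert hx b, (Finset.card_insert_le _ _).trans (by omega), hb⟩
      (Finset.subset_insert _ _) b (Finset.mem_insert_self _ _)
  obtain ⟨C, hC, hCfal⟩ := hfal false
  obtain ⟨D, hD, hDfal⟩ := hfal true
  have hxC : (x, true) ∈ C := by_contra fun h => hcons C hC (hCfal.of_insert h)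
  have hxD : (x, false) ∈ D := by_contra fun h => hcons D hD (hDfal.of_insert h)
  have hR := falsifies_resolventCl_iff.2 ⟨hCfal, hDfal⟩
  exact hcons _ (.resolve hC hD hxC hxD (hR.card_le.trans (by omega))) hR

lemma extFamily_narrowlyConsistent (hS : ∀ C ∈ S, C.card ≤ k)
    (hempty : ¬ WidthDerivable S k ∅) : ExtFamily S (k + 1) (narrowlyConsistent S k) := by
  refine ⟨⟨∅, ?_, by simp, ?_⟩, fun α hα => hα.1, fun α hα C hC => hα.2.2 C (.mem hC (hS C hC)),
    fun α hα => hα.2.1, ?_, fun α hα hcard x _ => exists_extension_mem_narrowlyConsistent hα hcard x⟩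
  · simp [Functional]
  · intro C hC hfal
    rw [Finset.card_eq_zero.1 (Nat.le_zero.1 hfal.card_le)] at hC
    exact hempty hC
  · rintro α ⟨hfun, hcard, hcons⟩ β hβα
    exact ⟨fun x b b' hb hb' => hfun x b b' (hβα hb) (hβα hb'),
      (Finset.card_le_card hβα).trans hcard, fun C hC hfal => hcons C hC (hfal.mono hβα)⟩

end ExtendibleFamilies

/-- Atserias–Dalmau characterization: for w(Σ) ≤ k, Σ has no resolution refutation of
width at most k iff there is an extendible (k+1)-family for Σ. -/
theorem width_characterization (S : Set Clause) (k : ℕ) (hw : ∀ C ∈ S, C.card ≤ k) :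
    (¬ ∃ L : List Clause, IsRefutation S L ∧ ∀ C ∈ L, C.card ≤ k) ↔
      ∃ A : Set (Finset (ℕ × Bool)), ExtFamily S (k + 1) A := by
  rw [exists_narrow_refutation_iff]
  constructor
  · exact fun hempty => ⟨_, extFamily_narrowlyConsistent hw hempty⟩
  · rintro ⟨A, hA⟩ hempty
    obtain ⟨α, hα⟩ := hA.1
    exact hA.not_falsifies_of_widthDerivable hempty α hα fun l hl => absurd hl (Finset.notMem_empty l)
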